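/- arXiv:2206.09719 — 2 statements merged into one kernel-verified Lean document; each statement's English description precedes it below -/
import Mathlib

section
/- No 3-cap 2-flat is a point reflection of itself: if S is a cap in F₂ = (Fin 2 → ZMod 3) with |S| = 3, then for every O ∈ F₂ one has S ≠ {2•O − x : x ∈ S}. -/
/-!
Summing over `S = 2O - S` gives `∑ S = |S| • 2O - ∑ S`, so `2 • ∑ S = 3 • 2O = 0` and hence `∑ S = 0`
in characteristic 3, which the three points of a cap cannot satisfy.
-/

/-- A cap in `Fin n → ZMod 3`: no three distinct points sum to zero. -/
def IsCap {n : ℕ} (S : Finset (Fin n → ZMod 3)) : Prop :=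
  ∀ a ∈ S, ∀ b ∈ S, ∀ c ∈ S, a ≠ b → a ≠ c → b ≠ c → a + b + c ≠ 0

theorem Finset.two_nsmul_sum_eq_card_nsmul_of_image_sub_eq {G : Type*} [AddCommGroup G]
    [DecidableEq G] {S : Finset G} {c : G} (h : S.image (c - ·) = S) :
    2 • ∑ x ∈ S, x = S.card • c := by
  have hsum : ∑ x ∈ S, x = S.card • c - ∑ x ∈ S, x := by
    calc ∑ x ∈ S, x = ∑ x ∈ S.image (c - ·), x := by rw [h]
      _ = ∑ x ∈ S, (c - x) := Finset.sum_image fun _ _ _ _ hxy => sub_right_injective hxy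
      _ = S.card • c - ∑ x ∈ S, x := by rw [Finset.sum_sub_distrib, Finset.sum_const]
  rw [two_nsmul]
  nth_rewrite 2 [hsum]
  abel

theorem Finset.sum_eq_zero_of_image_sub_eq_of_card_eq_three {V : Type*} [AddCommGroup V]
    [Module (ZMod 3) V] [DecidableEq V] {S : Finset V} {c : V} (hcard : S.card = 3)
    (h : S.image (c - ·) = S) : ∑ x ∈ S, x = 0 := by
  have htwo := S.two_nsmul_sum_eq_card_nsmul_of_image_sub_eq h
  rw [hcard, ZModModule.char_nsmul_eq_zero 3] at htwo
  calc ∑ x ∈ S, x = 3 • ∑ x ∈ S, x - 2 • ∑ x ∈ S, x := by abel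
    _ = 0 := by rw [ZModModule.char_nsmul_eq_zero 3, htwo, sub_zero]

theorem IsCap.sum_ne_zero_of_card_eq_three {n : ℕ} {S : Finset (Fin n → ZMod 3)} (hS : IsCap S)
    (hcard : S.card = 3) : ∑ x ∈ S, x ≠ 0 := by
  obtain ⟨a, b, c, hab, hac, hbc, rfl⟩ := Finset.card_eq_three.mp hcard
  have hsum : ∑ x ∈ {a, b, c}, x = a + b + c := by
    simp [Finset.sum_insert, hab, hac, hbc, add_assoc]
  rw [hsum]
  exact hS a (by simp) b (by simp) c (by simp) hab hac hbc

/-- No 3-cap 2-flat is a point reflection of itself. -/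
theorem cap2_3_no_self_point_reflection (S : Finset (Fin 2 → ZMod 3))
    (hS : IsCap S) (hcard : S.card = 3) (O : Fin 2 → ZMod 3) :
    S ≠ S.image (fun x => (2 : ZMod 3) • O - x) := fun h =>
  hS.sum_ne_zero_of_card_eq_three hcard
    (Finset.sum_eq_zero_of_image_sub_eq_of_card_eq_three hcard h.symm)
end

section
/- No 9-cap 3-flat is a point reflection of itself: if S is a cap in F₃ = (Fin 3 → ZMod 3) with |S| = 9, then for every O ∈ F₃ one has S ≠ {2•O − x : x ∈ S}. -/
/-!
The reflection `x ↦ 2•O - x` is an involution whose only fixed point is `O`. An involution of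
a set of odd size has a fixed point, so a reflection-invariant set of odd size contains `O`. But
then for any other point `x` of the set, the distinct points `x`, `2•O - x`, `O` sum to `3•O = 0`.
-/

open Function

theorem Finset.exists_mem_fixed_of_involutive_of_odd_card {α : Type*} {f : α → α}
    (hf : Involutive f) {s : Finset α} (hs : Set.MapsTo f s s) (hodd : Odd s.card) :
    ∃ x ∈ s, f x = x := by
  let σ : Equiv.Perm s := Involutive.toPerm (hs.restrict f s s) fun x => Subtype.ext (hf x)
  have hσ : σ ^ 2 ^ 1 = 1 := Equiv.ext fun x => Subtype.ext (hf x)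
  have : Fact (Nat.Prime 2) := ⟨Nat.prime_two⟩
  obtain ⟨x, hx⟩ := Equiv.Perm.exists_fixed_point_of_prime
    (by rwa [Fintype.card_coe, ← even_iff_two_dvd, Nat.not_even_iff_odd]) hσ
  exact ⟨x, x.2, congrArg Subtype.val hx⟩

section ZModThree

variable {V : Type*} [AddCommGroup V] [Module (ZMod 3) V]

theorem two_smul_sub_involutive (O : V) : Involutive fun x : V => (2 : ZMod 3) • O - x :=
  fun x => sub_sub_cancel _ x

theorem two_smul_sub_eq_self_iff {O x : V} : (2 : ZMod 3) • O - x = x ↔ x = O := by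
  rw [sub_eq_iff_eq_add, ← two_smul (ZMod 3), eq_comm,
    IsUnit.smul_left_cancel (IsUnit.of_mul_eq_one (a := (2 : ZMod 3)) 2 rfl)]

theorem add_two_smul_sub_add_eq_zero (O x : V) : x + ((2 : ZMod 3) • O - x) + O = 0 := by
  match_scalars <;> decide

end ZModThree

theorem IsCap.notMem_of_mapsTo_two_smul_sub {n : ℕ} {S : Finset (Fin n → ZMod 3)} (hS : IsCap S)
    {O x : Fin n → ZMod 3} (hmaps : Set.MapsTo (fun y => (2 : ZMod 3) • O - y) S S)
    (hx : x ∈ S) (hxO : x ≠ O) : O ∉ S := by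
  intro hO
  have hfx_ne_x : (2 : ZMod 3) • O - x ≠ x := mt two_smul_sub_eq_self_iff.1 hxO
  have hfx_ne_O : (2 : ZMod 3) • O - x ≠ O := fun h => hxO <|
    calc x = (2 : ZMod 3) • O - ((2 : ZMod 3) • O - x) := (two_smul_sub_involutive O x).symm
      _ = (2 : ZMod 3) • O - O := by rw [h]
      _ = O := two_smul_sub_eq_self_iff.2 rfl
  exact hS x hx _ (hmaps hx) O hO hfx_ne_x.symm hxO hfx_ne_O (add_two_smul_sub_add_eq_zero O x)

theorem IsCap.image_two_smul_sub_ne {n : ℕ} {S : Finset (Fin n → ZMod 3)} (hS : IsCap S)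
    (hodd : Odd S.card) (hlt : 1 < S.card) (O : Fin n → ZMod 3) :
    S ≠ S.image (fun x => (2 : ZMod 3) • O - x) := by
  intro h
  have hmaps : Set.MapsTo (fun x => (2 : ZMod 3) • O - x) S S := fun y hy => by
    rw [Finset.mem_coe, h]
    exact Finset.mem_image_of_mem _ hy
  obtain ⟨c, hc, hcO⟩ :=
    Finset.exists_mem_fixed_of_involutive_of_odd_card (two_smul_sub_involutive O) hmaps hodd
  obtain ⟨x, hx, hxO⟩ := S.exists_mem_ne hlt O
  exact hS.notMem_of_mapsTo_two_smul_sub hmaps hx hxO (two_smul_sub_eq_self_iff.1 hcO ▸ hc)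

/-- No 9-cap 3-flat is a point reflection of itself. -/
theorem cap3_9_no_self_point_reflection (S : Finset (Fin 3 → ZMod 3))
    (hS : IsCap S) (hcard : S.card = 9) (O : Fin 3 → ZMod 3) :
    S ≠ S.image (fun x => (2 : ZMod 3) • O - x) :=
  hS.image_two_smul_sub_ne (by rw [hcard]; decide) (by omega) O
end
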